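/- arXiv:2602.20549 — 4 statements merged into one kernel-verified Lean document; each statement's English description precedes it below -/
import Mathlib

section
/- Assume that for each t ∈ [0,T]: (i) π(t,x) v_π(t,x) log r(t,x) → 0 and π(t,x) v_π(t,x) → 0 and π(t,x) v_p(t,x) → 0 as x → ±∞; (ii) the functions x ↦ π(t,x) v_π(t,x) ∂_x log r(t,x), x ↦ π(t,x) v_p(t,x) ∂_x log r(t,x), x ↦ ∂_t π(t,x) · log r(t,x), and x ↦ π(t,x) ∂_t log r(t,x) are Lebesgue-integrable on ℝ; and (iii) the map t ↦ ∫_ℝ π(t,x) log r(t,x) dx is differentiable with derivative ∫_ℝ ∂_t(π(t,x) log r(t,x)) dx. Then for every t ∈ (0,T), d/dt ∫_ℝ π(t,x) log r(t,x) dx = ∫_ℝ π(t,x) (v_π(t,x) − v_p(t,x)) ∂_x log r(t,x) dx; i.e., the time derivative of the Kullback–Leibler divergence KL(π(t,·)‖p(t,·)) equals the expectation under π(t,·) of the inner product of the velocity difference with the gradient of the log density ratio. -/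
open MeasureTheory Filter

/-- **Time derivative of the KL divergence along two continuity equations (1D).**
`p` and `q` are smooth positive time-indexed probability densities on `ℝ` transported by
smooth velocity fields `vp` and `vq` via the continuity equations, and `r t x = q t x / p t x`
is the density ratio.  Under the stated decay, integrability and
differentiation-under-the-integral hypotheses, for every `t ∈ (0,T)`,
`d/dt ∫ q(t,x) log r(t,x) dx = ∫ q(t,x) (vq(t,x) − vp(t,x)) ∂ₓ log r(t,x) dx`. -/
theorem kl_time_derivative
    (T : ℝ) (hT : 0 < T)
    (p q vp vq : ℝ → ℝ → ℝ)
    (hp : ContDiff ℝ (⊤ : ℕ∞) (Function.uncurry p))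
    (hq : ContDiff ℝ (⊤ : ℕ∞) (Function.uncurry q))
    (hvp : ContDiff ℝ (⊤ : ℕ∞) (Function.uncurry vp))
    (hvq : ContDiff ℝ (⊤ : ℕ∞) (Function.uncurry vq))
    (hppos : ∀ t ∈ Set.Icc (0:ℝ) T, ∀ x : ℝ, 0 < p t x)
    (hqpos : ∀ t ∈ Set.Icc (0:ℝ) T, ∀ x : ℝ, 0 < q t x)
    (hpdens : ∀ t ∈ Set.Icc (0:ℝ) T, ∫ x : ℝ, p t x = 1)
    (hqdens : ∀ t ∈ Set.Icc (0:ℝ) T, ∫ x : ℝ, q t x = 1)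
    (hcontp : ∀ t ∈ Set.Icc (0:ℝ) T, ∀ x : ℝ,
      deriv (fun s => p s x) t = - deriv (fun y => p t y * vp t y) x)
    (hcontq : ∀ t ∈ Set.Icc (0:ℝ) T, ∀ x : ℝ,
      deriv (fun s => q s x) t = - deriv (fun y => q t y * vq t y) x)
    (r : ℝ → ℝ → ℝ)
    (hr : ∀ t x, r t x = q t x / p t x)
    -- (i) decay at `±∞`
    (hdec1 : ∀ t ∈ Set.Icc (0:ℝ) T,
      Tendsto (fun x => q t x * vq t x * Real.log (r t x)) atTop (nhds 0) ∧
      Tendsto (fun x => q t x * vq t x * Real.log (r t x)) atBot (nhds 0))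
    (hdec2 : ∀ t ∈ Set.Icc (0:ℝ) T,
      Tendsto (fun x => q t x * vq t x) atTop (nhds 0) ∧
      Tendsto (fun x => q t x * vq t x) atBot (nhds 0))
    (hdec3 : ∀ t ∈ Set.Icc (0:ℝ) T,
      Tendsto (fun x => q t x * vp t x) atTop (nhds 0) ∧
      Tendsto (fun x => q t x * vp t x) atBot (nhds 0))
    -- (ii) integrability on `ℝ`
    (hint1 : ∀ t ∈ Set.Icc (0:ℝ) T,
      Integrable (fun x => q t x * vq t x * deriv (fun y => Real.log (r t y)) x))
    (hint2 : ∀ t ∈ Set.Icc (0:ℝ) T,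
      Integrable (fun x => q t x * vp t x * deriv (fun y => Real.log (r t y)) x))
    (hint3 : ∀ t ∈ Set.Icc (0:ℝ) T,
      Integrable (fun x => deriv (fun s => q s x) t * Real.log (r t x)))
    (hint4 : ∀ t ∈ Set.Icc (0:ℝ) T,
      Integrable (fun x => q t x * deriv (fun s => Real.log (r s x)) t))
    -- (iii) differentiation under the integral sign
    (hdiff : ∀ t ∈ Set.Ioo (0:ℝ) T,
      HasDerivAt (fun s => ∫ x : ℝ, q s x * Real.log (r s x))
        (∫ x : ℝ, deriv (fun s => q s x * Real.log (r s x)) t) t) :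
    ∀ t ∈ Set.Ioo (0:ℝ) T,
      deriv (fun s => ∫ x : ℝ, q s x * Real.log (r s x)) t
        = ∫ x : ℝ, q t x * (vq t x - vp t x) * deriv (fun y => Real.log (r t y)) x := by
  intro t ht
  have htI : t ∈ Set.Icc (0:ℝ) T := ⟨ht.1.le, ht.2.le⟩
  have hpd := hp.differentiable (by simp)
  have hqd := hq.differentiable (by simp)
  have hvpd := hvp.differentiable (by simp)
  have hvqd := hvq.differentiable (by simp)
  -- x-slices
  have hpx : ∀ x : ℝ, HasDerivAt (fun y => p t y) (deriv (fun y => p t y) x) x := fun x =>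
    ((hpd.comp ((differentiable_const t).prodMk differentiable_id)) x).hasDerivAt
  have hqx : ∀ x : ℝ, HasDerivAt (fun y => q t y) (deriv (fun y => q t y) x) x := fun x =>
    ((hqd.comp ((differentiable_const t).prodMk differentiable_id)) x).hasDerivAt
  have hvpx : ∀ x : ℝ, HasDerivAt (fun y => vp t y) (deriv (fun y => vp t y) x) x := fun x =>
    ((hvpd.comp ((differentiable_const t).prodMk differentiable_id)) x).hasDerivAt
  have hvqx : ∀ x : ℝ, HasDerivAt (fun y => vq t y) (deriv (fun y => vq t y) x) x := fun x =>
    ((hvqd.comp ((differentiable_const t).prodMk differentiable_id)) x).hasDerivAt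
  -- t-slices
  have hpt : ∀ x : ℝ, HasDerivAt (fun s => p s x) (deriv (fun s => p s x) t) t := fun x =>
    ((hpd.comp (differentiable_id.prodMk (differentiable_const x))) t).hasDerivAt
  have hqt : ∀ x : ℝ, HasDerivAt (fun s => q s x) (deriv (fun s => q s x) t) t := fun x =>
    ((hqd.comp (differentiable_id.prodMk (differentiable_const x))) t).hasDerivAt
  -- log ratio derivatives
  have hlogx : ∀ x : ℝ, HasDerivAt (fun y => Real.log (r t y))
      (deriv (fun y => q t y) x / q t x - deriv (fun y => p t y) x / p t x) x := by
    intro x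
    have h1 : (fun y => Real.log (r t y)) = fun y => Real.log (q t y) - Real.log (p t y) := by
      funext y
      rw [hr, Real.log_div (ne_of_gt (hqpos t htI y)) (ne_of_gt (hppos t htI y))]
    rw [h1]
    exact ((hqx x).log (ne_of_gt (hqpos t htI x))).sub ((hpx x).log (ne_of_gt (hppos t htI x)))
  have hlogt : ∀ x : ℝ, HasDerivAt (fun s => Real.log (r s x))
      (deriv (fun s => q s x) t / q t x - deriv (fun s => p s x) t / p t x) t := by
    intro x
    have hnb : Set.Ioo (0:ℝ) T ∈ nhds t := isOpen_Ioo.mem_nhds ht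
    have h1 : (fun s => Real.log (q s x) - Real.log (p s x)) =ᶠ[nhds t]
        fun s => Real.log (r s x) := by
      filter_upwards [hnb] with s hs
      have hsI : s ∈ Set.Icc (0:ℝ) T := ⟨hs.1.le, hs.2.le⟩
      rw [hr, Real.log_div (ne_of_gt (hqpos s hsI x)) (ne_of_gt (hppos s hsI x))]
    exact HasDerivAt.congr_of_eventuallyEq
      (((hqt x).log (ne_of_gt (hqpos t htI x))).sub ((hpt x).log (ne_of_gt (hppos t htI x))))
      h1.symm
  -- products in x
  have hQVq : ∀ x : ℝ, HasDerivAt (fun y => q t y * vq t y)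
      (deriv (fun y => q t y) x * vq t x + q t x * deriv (fun y => vq t y) x) x :=
    fun x => (hqx x).mul (hvqx x)
  have hQVp : ∀ x : ℝ, HasDerivAt (fun y => q t y * vp t y)
      (deriv (fun y => q t y) x * vp t x + q t x * deriv (fun y => vp t y) x) x :=
    fun x => (hqx x).mul (hvpx x)
  have hPVp : ∀ x : ℝ, HasDerivAt (fun y => p t y * vp t y)
      (deriv (fun y => p t y) x * vp t x + p t x * deriv (fun y => vp t y) x) x :=
    fun x => (hpx x).mul (hvpx x)
  have hF1 : ∀ x : ℝ, HasDerivAt (fun y => q t y * vq t y * Real.log (r t y))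
      ((deriv (fun y => q t y) x * vq t x + q t x * deriv (fun y => vq t y) x) * Real.log (r t x)
        + q t x * vq t x *
          (deriv (fun y => q t y) x / q t x - deriv (fun y => p t y) x / p t x)) x :=
    fun x => (hQVq x).mul (hlogx x)
  have hF2 : ∀ x : ℝ, HasDerivAt (fun y => q t y * vp t y - q t y * vq t y)
      ((deriv (fun y => q t y) x * vp t x + q t x * deriv (fun y => vp t y) x)
        - (deriv (fun y => q t y) x * vq t x + q t x * deriv (fun y => vq t y) x)) x :=
    fun x => (hQVp x).sub (hQVq x)
  -- key pointwise identities
  have key2 : ∀ x : ℝ, deriv (fun y => q t y * vq t y * Real.log (r t y)) x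
      = -(deriv (fun s => q s x) t * Real.log (r t x))
        + q t x * vq t x * deriv (fun y => Real.log (r t y)) x := by
    intro x
    rw [(hF1 x).deriv, (hlogx x).deriv, hcontq t htI x, (hQVq x).deriv]
    ring
  have key3 : ∀ x : ℝ, deriv (fun y => q t y * vp t y - q t y * vq t y) x
      = q t x * deriv (fun s => Real.log (r s x)) t
        + q t x * vp t x * deriv (fun y => Real.log (r t y)) x := by
    intro x
    rw [(hF2 x).deriv, (hlogt x).deriv, (hlogx x).deriv, hcontq t htI x, hcontp t htI x,
      (hQVq x).deriv, (hPVp x).deriv]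
    field_simp [(hqpos t htI x).ne', (hppos t htI x).ne']
    ring
  have key1 : ∀ x : ℝ, deriv (fun s => q s x * Real.log (r s x)) t
      = (-(deriv (fun y => q t y * vq t y * Real.log (r t y)) x)
          + q t x * vq t x * deriv (fun y => Real.log (r t y)) x)
        + (deriv (fun y => q t y * vp t y - q t y * vq t y) x
          - q t x * vp t x * deriv (fun y => Real.log (r t y)) x) := by
    intro x
    have hql : HasDerivAt (fun s => q s x * Real.log (r s x))
        (deriv (fun s => q s x) t * Real.log (r t x)
          + q t x * (deriv (fun s => q s x) t / q t x - deriv (fun s => p s x) t / p t x)) t :=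
      (hqt x).mul (hlogt x)
    rw [key2 x, key3 x, hql.deriv, (hlogt x).deriv]
    ring
  -- integrability
  have ID1 : Integrable (fun x => deriv (fun y => q t y * vq t y * Real.log (r t y)) x) := by
    refine (((hint3 t htI).neg').add (hint1 t htI)).congr ?_
    exact Eventually.of_forall fun x => (key2 x).symm
  have ID2 : Integrable (fun x => deriv (fun y => q t y * vp t y - q t y * vq t y) x) := by
    refine ((hint4 t htI).add (hint2 t htI)).congr ?_
    exact Eventually.of_forall fun x => (key3 x).symm
  -- vanishing integrals of total derivatives
  have hzero1 : ∫ x : ℝ, deriv (fun y => q t y * vq t y * Real.log (r t y)) x = 0 := by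
    have hd : ∀ x : ℝ, HasDerivAt (fun y => q t y * vq t y * Real.log (r t y))
        (deriv (fun y => q t y * vq t y * Real.log (r t y)) x) x :=
      fun x => (hF1 x).differentiableAt.hasDerivAt
    have := integral_of_hasDerivAt_of_tendsto hd ID1 (hdec1 t htI).2 (hdec1 t htI).1
    simpa using this
  have hzero2 : ∫ x : ℝ, deriv (fun y => q t y * vp t y - q t y * vq t y) x = 0 := by
    have hd : ∀ x : ℝ, HasDerivAt (fun y => q t y * vp t y - q t y * vq t y)
        (deriv (fun y => q t y * vp t y - q t y * vq t y) x) x :=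
      fun x => (hF2 x).differentiableAt.hasDerivAt
    have hbot : Tendsto (fun x => q t x * vp t x - q t x * vq t x) atBot (nhds 0) := by
      simpa using (hdec3 t htI).2.sub (hdec2 t htI).2
    have htop : Tendsto (fun x => q t x * vp t x - q t x * vq t x) atTop (nhds 0) := by
      simpa using (hdec3 t htI).1.sub (hdec2 t htI).1
    have := integral_of_hasDerivAt_of_tendsto hd ID2 hbot htop
    simpa using this
  -- assemble
  have IA : Integrable (fun x => -deriv (fun y => q t y * vq t y * Real.log (r t y)) x
      + q t x * vq t x * deriv (fun y => Real.log (r t y)) x) :=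
    (ID1.neg'.add (hint1 t htI)).congr (Eventually.of_forall fun x => rfl)
  have IB : Integrable (fun x => deriv (fun y => q t y * vp t y - q t y * vq t y) x
      - q t x * vp t x * deriv (fun y => Real.log (r t y)) x) :=
    (ID2.sub (hint2 t htI)).congr (Eventually.of_forall fun x => rfl)
  have e1 : ∫ x : ℝ, deriv (fun s => q s x * Real.log (r s x)) t
      = (∫ x : ℝ, (-deriv (fun y => q t y * vq t y * Real.log (r t y)) x
          + q t x * vq t x * deriv (fun y => Real.log (r t y)) x))
        + ∫ x : ℝ, (deriv (fun y => q t y * vp t y - q t y * vq t y) x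
          - q t x * vp t x * deriv (fun y => Real.log (r t y)) x) := by
    rw [integral_congr_ae (Eventually.of_forall key1)]
    exact integral_add IA IB
  have eA : ∫ x : ℝ, (-deriv (fun y => q t y * vq t y * Real.log (r t y)) x
      + q t x * vq t x * deriv (fun y => Real.log (r t y)) x)
      = (∫ x : ℝ, -deriv (fun y => q t y * vq t y * Real.log (r t y)) x)
        + ∫ x : ℝ, q t x * vq t x * deriv (fun y => Real.log (r t y)) x :=
    integral_add ID1.neg' (hint1 t htI)
  have eA' : ∫ x : ℝ, -deriv (fun y => q t y * vq t y * Real.log (r t y)) x = 0 := by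
    rw [integral_neg, hzero1, neg_zero]
  have eB : ∫ x : ℝ, (deriv (fun y => q t y * vp t y - q t y * vq t y) x
      - q t x * vp t x * deriv (fun y => Real.log (r t y)) x)
      = (∫ x : ℝ, deriv (fun y => q t y * vp t y - q t y * vq t y) x)
        - ∫ x : ℝ, q t x * vp t x * deriv (fun y => Real.log (r t y)) x :=
    integral_sub ID2 (hint2 t htI)
  have hrhs : ∫ x : ℝ, q t x * (vq t x - vp t x) * deriv (fun y => Real.log (r t y)) x
      = (∫ x : ℝ, q t x * vq t x * deriv (fun y => Real.log (r t y)) x)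
        - ∫ x : ℝ, q t x * vp t x * deriv (fun y => Real.log (r t y)) x := by
    rw [← integral_sub (hint1 t htI) (hint2 t htI)]
    exact integral_congr_ae (Eventually.of_forall fun x => by ring)
  rw [(hdiff t ht).deriv, e1, eA, eA', eB, hzero2, hrhs]
  ring
end

section
/- Let μ be a probability measure on ℝ with compact support, let a ≠ 0 and σ > 0, and define p(x) = ∫ φ(x; a u, σ²) dμ(u). Then p(x) > 0 for every x ∈ ℝ, p is differentiable, and with m(x) = (∫ u · φ(x; a u, σ²) dμ(u)) / p(x) one has (log p)'(x) = (a · m(x) − x)/σ²; equivalently, the posterior mean satisfies m(x) = (x + σ² (log p)'(x))/a (Tweedie's formula). -/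
open MeasureTheory

/-- The Gaussian probability density with mean `m` and variance `τ2`. -/
noncomputable def gaussPDF (x m τ2 : ℝ) : ℝ :=
  (Real.sqrt (2 * Real.pi * τ2))⁻¹ * Real.exp (-((x - m) ^ 2) / (2 * τ2))

/-!
Differentiating `p(x) = ∫ φ(x; a u, σ²) dμ(u)` under the integral sign is legitimate because `μ`
lives on a bounded set, and the Gaussian score `∂ₓ φ(x; m, σ²) = φ(x; m, σ²) (m − x)/σ²` turns
`p'(x)` into `(a ∫ u φ(x; a u, σ²) dμ(u) − x p(x))/σ²`. Dividing by `p(x) > 0` gives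
`(log p)' = (a m − x)/σ²`.
-/

open Filter

section Gaussian

variable {τ2 : ℝ}

lemma gaussPDF_nonneg (x m : ℝ) : 0 ≤ gaussPDF x m τ2 := by
  unfold gaussPDF
  positivity

lemma gaussPDF_pos (x m : ℝ) (hτ : 0 < τ2) : 0 < gaussPDF x m τ2 := by
  unfold gaussPDF
  positivity

lemma gaussPDF_le_inv_sqrt (x m : ℝ) (hτ : 0 ≤ τ2) :
    gaussPDF x m τ2 ≤ (Real.sqrt (2 * Real.pi * τ2))⁻¹ := by
  refine mul_le_of_le_one_right (by positivity) (Real.exp_le_one_iff.2 ?_)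
  exact div_nonpos_of_nonpos_of_nonneg (neg_nonpos.2 (sq_nonneg _)) (by positivity)

lemma hasDerivAt_gaussPDF (m : ℝ) (hτ : τ2 ≠ 0) (x : ℝ) :
    HasDerivAt (fun y => gaussPDF y m τ2) (gaussPDF x m τ2 * ((m - x) / τ2)) x := by
  have hexponent : HasDerivAt (fun y => -((y - m) ^ 2) / (2 * τ2)) ((m - x) / τ2) x := by
    have hsq : HasDerivAt (fun y : ℝ => (y - m) ^ 2) (2 * (x - m)) x := by
      simpa using ((hasDerivAt_id x).sub_const m).fun_pow 2
    refine (hsq.neg.div_const (2 * τ2)).congr_deriv ?_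
    field_simp
    ring
  refine (((Real.hasDerivAt_exp _).comp x hexponent).const_mul
    (Real.sqrt (2 * Real.pi * τ2))⁻¹).congr_deriv ?_
  unfold gaussPDF
  ring

end Gaussian

section Mixture

variable {μ : Measure ℝ} {a τ2 : ℝ}

lemma continuous_gaussPDF_mixture (x : ℝ) : Continuous fun u => gaussPDF x (a * u) τ2 := by
  unfold gaussPDF
  fun_prop

lemma integrable_gaussPDF_mixture [IsFiniteMeasure μ] (hτ : 0 ≤ τ2) (x : ℝ) :
    Integrable (fun u => gaussPDF x (a * u) τ2) μ := by
  refine Integrable.mono' (integrable_const (Real.sqrt (2 * Real.pi * τ2))⁻¹)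
    (continuous_gaussPDF_mixture x).aestronglyMeasurable (Eventually.of_forall fun u => ?_)
  rw [Real.norm_of_nonneg (gaussPDF_nonneg _ _)]
  exact gaussPDF_le_inv_sqrt _ _ hτ

lemma integrable_mul_gaussPDF_mixture [IsFiniteMeasure μ] (hτ : 0 ≤ τ2) {R : ℝ}
    (hR : ∀ᵐ u ∂μ, |u| ≤ R) (x : ℝ) :
    Integrable (fun u => u * gaussPDF x (a * u) τ2) μ :=
  (integrable_gaussPDF_mixture hτ x).bdd_mul continuous_id.aestronglyMeasurable hR

lemma integral_gaussPDF_mixture_pos [IsFiniteMeasure μ] [NeZero μ] (hτ : 0 < τ2) (x : ℝ) :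
    0 < ∫ u, gaussPDF x (a * u) τ2 ∂μ := by
  rw [integral_pos_iff_support_of_nonneg (fun u => gaussPDF_nonneg _ _)
    (integrable_gaussPDF_mixture hτ.le x),
    Function.support_eq_univ fun u => (gaussPDF_pos _ _ hτ).ne']
  exact Measure.measure_univ_pos.2 (NeZero.ne μ)

lemma norm_gaussPDF_score_le (hτ : 0 < τ2) {R u x₀ x : ℝ} (hu : |u| ≤ R)
    (hx : x ∈ Metric.ball x₀ 1) :
    ‖gaussPDF x (a * u) τ2 * ((a * u - x) / τ2)‖
      ≤ (Real.sqrt (2 * Real.pi * τ2))⁻¹ * ((|a| * R + (|x₀| + 1)) / τ2) := by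
  have hx_abs : |x| ≤ |x₀| + 1 := by
    have := abs_sub_abs_le_abs_sub x x₀
    rw [Metric.mem_ball, Real.dist_eq] at hx
    linarith
  have hscore : |a * u - x| ≤ |a| * R + (|x₀| + 1) := calc
    |a * u - x| ≤ |a| * |u| + |x| := (abs_sub _ _).trans_eq (by rw [abs_mul])
    _ ≤ |a| * R + (|x₀| + 1) := by gcongr
  rw [norm_mul, Real.norm_of_nonneg (gaussPDF_nonneg _ _), Real.norm_eq_abs, abs_div,
    abs_of_pos hτ]
  exact mul_le_mul (gaussPDF_le_inv_sqrt _ _ hτ.le) (by gcongr) (by positivity) (by positivity)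

lemma hasDerivAt_integral_gaussPDF_mixture [IsFiniteMeasure μ] (hτ : 0 < τ2) {R : ℝ}
    (hR : ∀ᵐ u ∂μ, |u| ≤ R) (x₀ : ℝ) :
    HasDerivAt (fun x => ∫ u, gaussPDF x (a * u) τ2 ∂μ)
      (∫ u, gaussPDF x₀ (a * u) τ2 * ((a * u - x₀) / τ2) ∂μ) x₀ :=
  (hasDerivAt_integral_of_dominated_loc_of_deriv_le (Metric.ball_mem_nhds x₀ one_pos)
    (Eventually.of_forall fun x => (continuous_gaussPDF_mixture x).aestronglyMeasurable)
    (integrable_gaussPDF_mixture hτ.le x₀)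
    ((continuous_gaussPDF_mixture x₀).mul (by fun_prop)).aestronglyMeasurable
    (by filter_upwards [hR] with u hu x hx using norm_gaussPDF_score_le hτ hu hx)
    (integrable_const _)
    (Eventually.of_forall fun u x _ => hasDerivAt_gaussPDF (a * u) hτ.ne' x)).2

lemma integral_gaussPDF_mixture_score [IsFiniteMeasure μ] (hτ : 0 ≤ τ2) {R : ℝ}
    (hR : ∀ᵐ u ∂μ, |u| ≤ R) (x : ℝ) :
    ∫ u, gaussPDF x (a * u) τ2 * ((a * u - x) / τ2) ∂μ
      = (a * ∫ u, u * gaussPDF x (a * u) τ2 ∂μ - x * ∫ u, gaussPDF x (a * u) τ2 ∂μ) / τ2 := by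
  have hsplit : (fun u => gaussPDF x (a * u) τ2 * ((a * u - x) / τ2))
      = fun u => a / τ2 * (u * gaussPDF x (a * u) τ2) - x / τ2 * gaussPDF x (a * u) τ2 := by
    ext u
    ring
  rw [hsplit, integral_sub ((integrable_mul_gaussPDF_mixture hτ hR x).const_mul _)
    ((integrable_gaussPDF_mixture hτ x).const_mul _), integral_const_mul, integral_const_mul]
  ring

end Mixture

/-- **Tweedie's formula (1D).**
Let `μ` be a compactly supported probability measure (the clean-data distribution), `a ≠ 0`,
`σ > 0`, and `p(x) = ∫ φ(x; a u, σ²) dμ(u)` the density of `x_t = a x₀ + σ z`.  Then `p` is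
everywhere positive and differentiable, and with posterior mean
`m(x) = (∫ u φ(x; a u, σ²) dμ(u)) / p(x)` one has
`(log p)'(x) = (a m(x) − x)/σ²`, equivalently `m(x) = (x + σ² (log p)'(x))/a`. -/
theorem tweedie_formula
    (μ : Measure ℝ) [IsProbabilityMeasure μ]
    (K : Set ℝ) (hK : IsCompact K) (hμK : μ Kᶜ = 0)
    (a σ : ℝ) (ha : a ≠ 0) (hσ : 0 < σ)
    (p : ℝ → ℝ) (hp : ∀ x, p x = ∫ u, gaussPDF x (a * u) (σ ^ 2) ∂μ) :
    (∀ x, 0 < p x) ∧ Differentiable ℝ p ∧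
    (∀ x, deriv (fun y => Real.log (p y)) x
        = (a * ((∫ u, u * gaussPDF x (a * u) (σ ^ 2) ∂μ) / p x) - x) / σ ^ 2) ∧
    (∀ x, (∫ u, u * gaussPDF x (a * u) (σ ^ 2) ∂μ) / p x
        = (x + σ ^ 2 * deriv (fun y => Real.log (p y)) x) / a) := by
  have hτ : 0 < σ ^ 2 := by positivity
  obtain ⟨R, hR⟩ := hK.isBounded.exists_norm_le
  have hμR : ∀ᵐ u ∂μ, |u| ≤ R := by
    filter_upwards [mem_ae_iff.2 hμK] with u hu using hR u hu
  have hpos : ∀ x, 0 < p x := fun x => (hp x).symm ▸ integral_gaussPDF_mixture_pos hτ x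
  have hderiv : ∀ x, HasDerivAt p ((a * ∫ u, u * gaussPDF x (a * u) (σ ^ 2) ∂μ
      - x * p x) / σ ^ 2) x := by
    intro x
    rw [hp x, funext hp, ← integral_gaussPDF_mixture_score hτ.le hμR x]
    exact hasDerivAt_integral_gaussPDF_mixture hτ hμR x
  have hlog : ∀ x, deriv (fun y => Real.log (p y)) x
      = (a * ((∫ u, u * gaussPDF x (a * u) (σ ^ 2) ∂μ) / p x) - x) / σ ^ 2 := by
    intro x
    rw [((hderiv x).log (hpos x).ne').deriv]
    field_simp [(hpos x).ne']
  refine ⟨hpos, fun x => (hderiv x).differentiableAt, hlog, fun x => ?_⟩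
  rw [hlog x]
  generalize (∫ u, u * gaussPDF x (a * u) (σ ^ 2) ∂μ) / p x = m
  field_simp
  ring
end

section
/- Let m ∈ ℝ and s > 0, and let g(x) = φ(x; m, s²). Let L : ℝ → ℝ be continuously differentiable and positive, and assume there are constants C > 0 and k ∈ ℕ such that |L(x)| ≤ C(1 + |x|)^k and |L'(x)| ≤ C(1 + |x|)^k for all x. Then Z = ∫ L(x) g(x) dx is finite and positive, and (1/Z) ∫ x L(x) g(x) dx = m + s² (1/Z) ∫ L'(x) g(x) dx; i.e., the mean of the Gaussian density g tilted by the likelihood L equals m plus s² times the tilted expectation of the log-likelihood gradient (log L)'. -/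
/-!
Since `φ' = -(x - m) / s² · φ` for the Gaussian density `φ = φ(·; m, s²)`, integrating
`(L φ)' = L' φ - (x - m) / s² · L φ` over `ℝ` gives Stein's identity
`∫ x L φ = m ∫ L φ + s² ∫ L' φ`. Polynomial growth of `L` and `L'` makes all the integrands
integrable because a Gaussian has finite moments of every order, and `Z = ∫ L φ > 0` because the
integrand is continuous and positive; dividing by `Z` gives the identity.
-/

open MeasureTheory

open ProbabilityTheory
open scoped NNReal

namespace ProbabilityTheory

variable {μ : ℝ} {v : ℝ≥0}

lemma gaussPDF_eq_gaussianPDFReal (x m : ℝ) (v : ℝ≥0) :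
    gaussPDF x m v = gaussianPDFReal m v x :=
  rfl

lemma hasDerivAt_gaussianPDFReal (x : ℝ) :
    HasDerivAt (gaussianPDFReal μ v) (-(x - μ) / v * gaussianPDFReal μ v x) x := by
  have hexponent : HasDerivAt (fun y => -(y - μ) ^ 2 / (2 * (v : ℝ))) (-(x - μ) / v) x :=
    ((((hasDerivAt_id' x).sub_const μ).pow 2).neg.div_const _).congr_deriv (by ring)
  refine (hexponent.exp.const_mul (√(2 * Real.pi * v))⁻¹).congr_deriv ?_
  rw [gaussianPDFReal]
  ring

lemma continuous_gaussianPDFReal : Continuous (gaussianPDFReal μ v) :=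
  continuous_iff_continuousAt.2 fun x => (hasDerivAt_gaussianPDFReal x).continuousAt

lemma integrable_one_add_abs_pow_gaussianReal (k : ℕ) :
    Integrable (fun x : ℝ => (1 + |x|) ^ k) (gaussianReal μ v) := by
  have hmem : MemLp (fun x : ℝ => 1 + ‖x‖) k (gaussianReal μ v) :=
    (memLp_const (1 : ℝ)).add (memLp_id_gaussianReal (μ := μ) (v := v) k).norm
  refine hmem.integrable_norm_pow'.congr (ae_of_all _ fun x => ?_)
  simp [abs_of_nonneg (by positivity : (0 : ℝ) ≤ 1 + |x|)]

lemma integrable_gaussianReal_of_abs_le_pow {h : ℝ → ℝ}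
    (hh : AEStronglyMeasurable h (gaussianReal μ v)) (C : ℝ) (k : ℕ)
    (hbound : ∀ x, |h x| ≤ C * (1 + |x|) ^ k) : Integrable h (gaussianReal μ v) :=
  ((integrable_one_add_abs_pow_gaussianReal k).const_mul C).mono' hh (ae_of_all _ hbound)

lemma integrable_mul_gaussianPDFReal_iff (hv : v ≠ 0) {h : ℝ → ℝ} :
    Integrable (fun x => h x * gaussianPDFReal μ v x) ↔ Integrable h (gaussianReal μ v) := by
  rw [gaussianReal_of_var_ne_zero _ hv, integrable_withDensity_iff_integrable_smul'
    (measurable_gaussianPDF μ v) (ae_of_all _ fun _ => gaussianPDF_lt_top)]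
  simp [mul_comm]

lemma integral_mul_gaussianPDFReal_pos (hv : v ≠ 0) {u : ℝ → ℝ} (hu : Continuous u)
    (hu_pos : ∀ x, 0 < u x) (hu_int : Integrable (fun x => u x * gaussianPDFReal μ v x)) :
    0 < ∫ x, u x * gaussianPDFReal μ v x :=
  integral_pos_of_integrable_nonneg_nonzero (x := 0) (hu.mul continuous_gaussianPDFReal) hu_int
    (fun x => (mul_pos (hu_pos x) (gaussianPDFReal_pos μ v x hv)).le)
    (mul_pos (hu_pos 0) (gaussianPDFReal_pos μ v 0 hv)).ne'

lemma integral_mul_mul_gaussianPDFReal (hv : v ≠ 0) {u u' : ℝ → ℝ}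
    (hu : ∀ x, HasDerivAt u (u' x) x)
    (hu_int : Integrable (fun x => u x * gaussianPDFReal μ v x))
    (hxu_int : Integrable (fun x => x * u x * gaussianPDFReal μ v x))
    (hu'_int : Integrable (fun x => u' x * gaussianPDFReal μ v x)) :
    ∫ x, x * u x * gaussianPDFReal μ v x
      = μ * (∫ x, u x * gaussianPDFReal μ v x) + v * ∫ x, u' x * gaussianPDFReal μ v x := by
  set φ := gaussianPDFReal μ v
  have hderiv : ∀ x, HasDerivAt (fun x => u x * φ x)
      ((v : ℝ)⁻¹ * (v * (u' x * φ x) + μ * (u x * φ x) - x * u x * φ x)) x := fun x =>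
    ((hu x).mul (hasDerivAt_gaussianPDFReal x)).congr_deriv (by field_simp; ring)
  have hsum : Integrable (fun x => v * (u' x * φ x) + μ * (u x * φ x)) :=
    (hu'_int.const_mul _).add (hu_int.const_mul _)
  have hzero : (v : ℝ)⁻¹ * (v * (∫ x, u' x * φ x) + μ * (∫ x, u x * φ x)
      - ∫ x, x * u x * φ x) = 0 := by
    rw [← integral_eq_zero_of_hasDerivAt_of_integrable hderiv
      ((hsum.sub hxu_int).const_mul _) hu_int, integral_const_mul, integral_sub hsum hxu_int,
      integral_add (hu'_int.const_mul _) (hu_int.const_mul _), integral_const_mul,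
      integral_const_mul]
  linarith [(mul_eq_zero.1 hzero).resolve_left (inv_ne_zero (mod_cast hv))]

end ProbabilityTheory

theorem tilted_gaussian_mean_identity_general
    (m s : ℝ) (hs : 0 < s)
    (g : ℝ → ℝ) (hg : ∀ x, g x = gaussPDF x m (s ^ 2))
    (L : ℝ → ℝ) (hL : ContDiff ℝ 1 L) (hLpos : ∀ x, 0 < L x)
    (C : ℝ) (k : ℕ)
    (hLbound : ∀ x, |L x| ≤ C * (1 + |x|) ^ k)
    (hL'bound : ∀ x, |deriv L x| ≤ C * (1 + |x|) ^ k) :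
    Integrable (fun x => L x * g x) ∧
    0 < ∫ x, L x * g x ∧
    (∫ x, L x * g x)⁻¹ * ∫ x, x * L x * g x
      = m + s ^ 2 * ((∫ x, L x * g x)⁻¹ * ∫ x, deriv L x * g x) := by
  obtain ⟨v, hv_coe⟩ : ∃ v : ℝ≥0, (v : ℝ) = s ^ 2 := ⟨⟨s ^ 2, sq_nonneg s⟩, rfl⟩
  have hv : v ≠ 0 := by rw [← NNReal.coe_ne_zero, hv_coe]; positivity
  rw [← hv_coe] at hg ⊢
  obtain rfl : g = gaussianPDFReal m v :=
    funext fun x => (hg x).trans (gaussPDF_eq_gaussianPDFReal x m v)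
  have integrable_of_bound {h : ℝ → ℝ} (hh : Continuous h) (n : ℕ)
      (hbound : ∀ x, |h x| ≤ C * (1 + |x|) ^ n) :
      Integrable (fun x => h x * gaussianPDFReal m v x) :=
    (integrable_mul_gaussianPDFReal_iff hv).2
      (integrable_gaussianReal_of_abs_le_pow hh.aestronglyMeasurable C n hbound)
  have hZ_int := integrable_of_bound hL.continuous k hLbound
  have hxL_int : Integrable (fun x => x * L x * gaussianPDFReal m v x) :=
    integrable_of_bound (continuous_id.mul hL.continuous) (k + 1) fun x => by
      rw [abs_mul, pow_succ]
      nlinarith [hLbound x, abs_nonneg x, abs_nonneg (L x)]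
  have hZ_pos := integral_mul_gaussianPDFReal_pos hv hL.continuous hLpos hZ_int
  refine ⟨hZ_int, hZ_pos, ?_⟩
  rw [integral_mul_mul_gaussianPDFReal hv (fun x => (hL.differentiable one_ne_zero x).hasDerivAt)
    hZ_int hxL_int (integrable_of_bound (hL.continuous_deriv le_rfl) k hL'bound)]
  field_simp

/-- **Tilted Gaussian mean identity (Stein / integration by parts).**
Let `g = φ(·; m, s²)` with `s > 0`, and let `L` be a positive `C¹` likelihood with `L` and
`L'` of polynomial growth.  Then `Z = ∫ L g` is finite (i.e. `L·g` is integrable) and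
positive, and `(1/Z) ∫ x L(x) g(x) dx = m + s² (1/Z) ∫ L'(x) g(x) dx`. -/
theorem tilted_gaussian_mean_identity
    (m s : ℝ) (hs : 0 < s)
    (g : ℝ → ℝ) (hg : ∀ x, g x = gaussPDF x m (s ^ 2))
    (L : ℝ → ℝ) (hL : ContDiff ℝ 1 L) (hLpos : ∀ x, 0 < L x)
    (C : ℝ) (hC : 0 < C) (k : ℕ)
    (hLbound : ∀ x, |L x| ≤ C * (1 + |x|) ^ k)
    (hL'bound : ∀ x, |deriv L x| ≤ C * (1 + |x|) ^ k) :
    Integrable (fun x => L x * g x) ∧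
    0 < ∫ x, L x * g x ∧
    (∫ x, L x * g x)⁻¹ * ∫ x, x * L x * g x
      = m + s ^ 2 * ((∫ x, L x * g x)⁻¹ * ∫ x, deriv L x * g x) :=
  tilted_gaussian_mean_identity_general m s hs g hg L hL hLpos C k hLbound hL'bound
end

section
/- Fix T > 0. Let p : ℝ × ℝ → ℝ be smooth and positive on [0,T] × ℝ, let v : ℝ × ℝ → ℝ be a smooth velocity field with ∂_t p(t,x) = −∂_x(p(t,x) v(t,x)) on [0,T] × ℝ, and let G : ℝ × ℝ → ℝ be smooth and positive. Define Z(t) = ∫_ℝ p(t,x) G(t,x) dx and assume 0 < Z(t) < ∞ for all t, that p(t,x) v(t,x) G(t,x) → 0 as x → ±∞ for each t, that the integrands below are integrable for each t, and that t ↦ Z(t) is differentiable with Z'(t) = ∫_ℝ ∂_t (p(t,x) G(t,x)) dx. Then d/dt log Z(t) = (1/Z(t)) ∫_ℝ p(t,x) G(t,x) [ v(t,x) ∂_x log G(t,x) + ∂_t log G(t,x) ] dx; i.e., the derivative of the log-evidence along the twisted marginals equals the expectation under the tilted density π(t,x) = p(t,x)G(t,x)/Z(t) of v ∂_x log G + ∂_t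 log G. -/
open MeasureTheory Filter

/-- **Derivative of the log-evidence along the twisted (TDS) marginals.**
Let `p(t,·)` be smooth positive densities transported by the smooth velocity `v` via the
continuity equation on `[0,T] × ℝ`, let `G` be a smooth positive time-dependent twisting
likelihood, and let `Z(t) = ∫ p(t,x) G(t,x) dx`.  Under the stated positivity/finiteness,
decay, integrability and differentiation-under-the-integral hypotheses, for `t ∈ (0,T)`,
`d/dt log Z(t) = (1/Z(t)) ∫ p(t,x) G(t,x) [v(t,x) ∂ₓ log G(t,x) + ∂ₜ log G(t,x)] dx`. -/
theorem log_evidence_derivative_twisted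
    (T : ℝ) (hT : 0 < T)
    (p v : ℝ → ℝ → ℝ)
    (hp : ContDiff ℝ (⊤ : ℕ∞) (Function.uncurry p))
    (hv : ContDiff ℝ (⊤ : ℕ∞) (Function.uncurry v))
    (hppos : ∀ t ∈ Set.Icc (0:ℝ) T, ∀ x : ℝ, 0 < p t x)
    (hcont : ∀ t ∈ Set.Icc (0:ℝ) T, ∀ x : ℝ,
      deriv (fun s => p s x) t = - deriv (fun y => p t y * v t y) x)
    (G : ℝ → ℝ → ℝ) (hG : ContDiff ℝ (⊤ : ℕ∞) (Function.uncurry G))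
    (hGpos : ∀ t x, 0 < G t x)
    (Z : ℝ → ℝ) (hZ : ∀ t, Z t = ∫ x : ℝ, p t x * G t x)
    -- `0 < Z(t) < ∞`
    (hZfin : ∀ t ∈ Set.Icc (0:ℝ) T, Integrable (fun x => p t x * G t x))
    (hZpos : ∀ t ∈ Set.Icc (0:ℝ) T, 0 < Z t)
    -- decay at `±∞`
    (hdec : ∀ t ∈ Set.Icc (0:ℝ) T,
      Tendsto (fun x => p t x * v t x * G t x) atTop (nhds 0) ∧
      Tendsto (fun x => p t x * v t x * G t x) atBot (nhds 0))
    -- integrability of the relevant integrands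
    (hint1 : ∀ t ∈ Set.Icc (0:ℝ) T,
      Integrable (fun x => deriv (fun s => p s x * G s x) t))
    (hint2 : ∀ t ∈ Set.Icc (0:ℝ) T,
      Integrable (fun x => p t x * G t x *
        (v t x * deriv (fun y => Real.log (G t y)) x
          + deriv (fun s => Real.log (G s x)) t)))
    -- differentiation under the integral sign
    (hZ' : ∀ t ∈ Set.Ioo (0:ℝ) T,
      HasDerivAt Z (∫ x : ℝ, deriv (fun s => p s x * G s x) t) t) :
    ∀ t ∈ Set.Ioo (0:ℝ) T,
      deriv (fun s => Real.log (Z s)) t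
        = (Z t)⁻¹ *
          ∫ x : ℝ, p t x * G t x *
            (v t x * deriv (fun y => Real.log (G t y)) x
              + deriv (fun s => Real.log (G s x)) t) := by
  intro t ht
  have htI : t ∈ Set.Icc (0:ℝ) T := Set.mem_Icc_of_Ioo ht
  have hpd := hp.differentiable (by simp)
  have hvd := hv.differentiable (by simp)
  have hGd := hG.differentiable (by simp)
  have hps : ∀ x : ℝ, Differentiable ℝ (fun s => p s x) := fun x =>
    hpd.comp (differentiable_id.prodMk (differentiable_const x))
  have hpy : ∀ s : ℝ, Differentiable ℝ (fun y => p s y) := fun s =>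
    hpd.comp ((differentiable_const s).prodMk differentiable_id)
  have hvy : ∀ s : ℝ, Differentiable ℝ (fun y => v s y) := fun s =>
    hvd.comp ((differentiable_const s).prodMk differentiable_id)
  have hGs : ∀ x : ℝ, Differentiable ℝ (fun s => G s x) := fun x =>
    hGd.comp (differentiable_id.prodMk (differentiable_const x))
  have hGy : ∀ s : ℝ, Differentiable ℝ (fun y => G s y) := fun s =>
    hGd.comp ((differentiable_const s).prodMk differentiable_id)
  set F : ℝ → ℝ := fun x => p t x * G t x *
      (v t x * deriv (fun y => Real.log (G t y)) x
        + deriv (fun s => Real.log (G s x)) t) with hF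
  set h : ℝ → ℝ := fun y => p t y * v t y * G t y with hh
  have key : ∀ x : ℝ, deriv (fun s => p s x * G s x) t = F x - deriv h x := by
    intro x
    have hGne : G t x ≠ 0 := (hGpos t x).ne'
    have h1 : deriv (fun s => p s x * G s x) t
        = deriv (fun s => p s x) t * G t x + p t x * deriv (fun s => G s x) t :=
      deriv_mul ((hps x) t) ((hGs x) t)
    have h2 : deriv (fun s => Real.log (G s x)) t = deriv (fun s => G s x) t / G t x :=
      ((((hGs x) t).hasDerivAt).log hGne).deriv
    have h3 : deriv (fun y => Real.log (G t y)) x = deriv (fun y => G t y) x / G t x :=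
      ((((hGy t) x).hasDerivAt).log hGne).deriv
    have h4 : deriv h x = deriv (fun y => p t y * v t y) x * G t x
        + (p t x * v t x) * deriv (fun y => G t y) x :=
      deriv_mul (((hpy t).mul (hvy t)) x) ((hGy t) x)
    have h5 := hcont t htI x
    rw [h1, h5, h4, hF]
    simp only [h2, h3]
    field_simp
    ring
  have hdiff_h : Differentiable ℝ h := ((hpy t).mul (hvy t)).mul (hGy t)
  have hint_h : Integrable (deriv h) := by
    have hInt : Integrable (fun x => F x - deriv (fun s => p s x * G s x) t) :=
      (hint2 t htI).sub (hint1 t htI)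
    exact hInt.congr (Filter.Eventually.of_forall fun x => by
      show F x - deriv (fun s => p s x * G s x) t = deriv h x
      rw [key x]; ring)
  have hzero : (∫ x : ℝ, deriv h x) = 0 := by
    have hlim : Tendsto (fun n : ℝ => ∫ x in (-n)..n, deriv h x) atTop
        (nhds (∫ x : ℝ, deriv h x)) :=
      intervalIntegral_tendsto_integral hint_h (tendsto_neg_atTop_atBot.comp tendsto_id)
        tendsto_id
    have heq : ∀ n : ℝ, (∫ x in (-n)..n, deriv h x) = h n - h (-n) := fun n =>
      intervalIntegral.integral_deriv_eq_sub (fun x _ => (hdiff_h x))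
        hint_h.intervalIntegrable
    have hlim2 : Tendsto (fun n : ℝ => h n - h (-n)) atTop (nhds 0) := by
      have := (hdec t htI).1.sub ((hdec t htI).2.comp tendsto_neg_atTop_atBot)
      simpa using this
    have := tendsto_nhds_unique ((Filter.Tendsto.congr heq) hlim) hlim2
    exact this
  have hZt := hZ' t ht
  have hlog := (hZt.log (hZpos t htI).ne').deriv
  have hintF : (∫ x : ℝ, deriv (fun s => p s x * G s x) t) = ∫ x : ℝ, F x := by
    rw [show (fun x : ℝ => deriv (fun s => p s x * G s x) t)
        = fun x => F x - deriv h x from funext key,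
      integral_sub (hint2 t htI) hint_h, hzero, sub_zero]
  rw [hlog, hintF, div_eq_inv_mul]
end
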